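/- arXiv:math/0408161 — 7 statements merged into one kernel-verified Lean document; each statement's English description precedes it below -/
import Mathlib

section
/- The only solutions in positive integers a and primes r ≥ 7 of the equation 12a(ar+1) = r² - 1 or 12a(ar-1) = r² - 1 are (a,r) = (1,11) (giving binomial(11,2) = (11³-11)/24) and (a,r) = (1,13) (giving binomial(14,2) = (13³-13)/24). Equivalently, if m is a positive integer and r ≥ 7 a prime with binomial(m,2) = (r³-r)/24 and r divides m or r divides m-1, then (r,m) = (11,11) or (r,m) = (13,14). -/
set_option maxHeartbeats 1000000


/-- If `m` is a positive integer and `r ≥ 7` a prime with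
`binomial(m,2) = (r³-r)/24` and `r ∣ m` or `r ∣ m-1`, then
`(r,m) = (11,11)` or `(r,m) = (13,14)`. -/
theorem stmt_2 (r m : ℕ) (hr : r.Prime) (h7 : 7 ≤ r) (hm : 0 < m)
    (heq : m.choose 2 = (r ^ 3 - r) / 24) (hdvd : r ∣ m ∨ r ∣ m - 1) :
    (r = 11 ∧ m = 11) ∨ (r = 13 ∧ m = 14) := by
  -- r is odd and not divisible by 3
  have h2 : ¬ (2 ∣ r) := by
    intro h
    have := (Nat.prime_dvd_prime_iff_eq Nat.prime_two hr).mp h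
    omega
  have h3 : ¬ (3 ∣ r) := by
    intro h
    have := (Nat.prime_dvd_prime_iff_eq Nat.prime_three hr).mp h
    omega
  have h24mod : r % 24 = 1 ∨ r % 24 = 5 ∨ r % 24 = 7 ∨ r % 24 = 11 ∨
      r % 24 = 13 ∨ r % 24 = 17 ∨ r % 24 = 19 ∨ r % 24 = 23 := by omega
  have hsq : r ^ 2 % 24 = 1 := by
    rw [Nat.pow_mod]
    rcases h24mod with h | h | h | h | h | h | h | h <;> rw [h]
  have h1r2 : 1 ≤ r ^ 2 := Nat.one_le_pow _ _ (by omega)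
  have hdvd2 : 24 ∣ r ^ 2 - 1 := by omega
  have hdvd24 : 24 ∣ r ^ 3 - r := by
    have hsub : r ^ 3 - r = r * (r ^ 2 - 1) := by
      rw [Nat.mul_sub, mul_one, ← pow_succ']
    rw [hsub]
    exact Dvd.dvd.mul_left hdvd2 r
  have key : 24 * m.choose 2 = r ^ 3 - r := by
    rw [heq, Nat.mul_div_cancel' hdvd24]
  have h2d : 2 ∣ m * (m - 1) := by
    have : Even ((m - 1) * (m - 1 + 1)) := Nat.even_mul_succ_self (m - 1)
    have hm1 : m - 1 + 1 = m := by omega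
    rw [hm1] at this
    obtain ⟨c, hc⟩ := this
    exact ⟨c, by rw [Nat.mul_comm]; omega⟩
  have key2 : 2 * m.choose 2 = m * (m - 1) := by
    rw [Nat.choose_two_right, Nat.mul_div_cancel' h2d]
  have keyN : 12 * (m * (m - 1)) = r ^ 3 - r := by
    rw [← key2, ← key]; ring
  have hr3 : r < r ^ 3 := by nlinarith
  have keyN' : 12 * (m * (m - 1)) + r = r ^ 3 := by omega
  have hm2 : 2 ≤ m := by
    by_contra h
    have hm1 : m = 1 := by omega
    rw [hm1] at keyN'
    simp at keyN'
    omega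
  have hR7 : (7 : ℤ) ≤ (r : ℤ) := by exact_mod_cast h7
  have hRne : (r : ℤ) ≠ 0 := by
    intro h
    have : r = 0 := by exact_mod_cast h
    omega
  rcases hdvd with ⟨a, ha⟩ | ⟨a, ha⟩
  · -- case r ∣ m, m = r * a
    have ha1 : 1 ≤ a := by
      rcases Nat.eq_zero_or_pos a with h | h
      · rw [h, mul_zero] at ha; omega
      · exact h
    have hra : 1 ≤ r * a := by
      calc 1 ≤ 1 * 1 := by norm_num
      _ ≤ r * a := Nat.mul_le_mul (by omega) ha1
    rw [ha] at keyN'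
    have hz : 12 * ((r : ℤ) * a * ((r : ℤ) * a - 1)) + r = (r : ℤ) ^ 3 := by
      have := keyN'
      zify [show 1 ≤ r * a from hra] at this
      linarith
    have hA1 : (1 : ℤ) ≤ (a : ℤ) := by exact_mod_cast ha1
    have hz2 : 12 * ((a : ℤ) * ((r : ℤ) * a - 1)) + 1 = (r : ℤ) ^ 2 := by
      apply mul_left_cancel₀ hRne
      linear_combination hz
    have hK : (r : ℤ) * (12 * (a : ℤ) ^ 2 - r) = 12 * a - 1 := by
      linear_combination hz2
    have hKpos : 1 ≤ 12 * (a : ℤ) ^ 2 - r := by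
      by_contra h
      push_neg at h
      have e1 : (0:ℤ) ≤ (r : ℤ) * (-(12 * (a : ℤ) ^ 2 - r)) :=
        mul_nonneg (by linarith) (by linarith)
      have e2 : (r : ℤ) * (-(12 * (a : ℤ) ^ 2 - r)) = -(12 * a - 1) := by
        linear_combination -hK
      linarith
    have b1 : (r : ℤ) ≤ 12 * a - 1 := by
      have e1 : (0:ℤ) ≤ (r : ℤ) * (12 * (a : ℤ) ^ 2 - r - 1) :=
        mul_nonneg (by linarith) (by linarith)
      have e2 : (r : ℤ) * (12 * (a : ℤ) ^ 2 - r - 1) = (12 * a - 1) - r := by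
        linear_combination hK
      linarith
    have b2 : 7 * (12 * (a : ℤ) ^ 2 - r) ≤ 12 * a - 1 := by
      have e1 : (0:ℤ) ≤ ((r : ℤ) - 7) * (12 * (a : ℤ) ^ 2 - r) :=
        mul_nonneg (by linarith) (by linarith)
      have e2 : ((r : ℤ) - 7) * (12 * (a : ℤ) ^ 2 - r)
          = (12 * a - 1) - 7 * (12 * (a : ℤ) ^ 2 - r) := by
        linear_combination hK
      linarith
    have b3 : 84 * (a : ℤ) ^ 2 ≤ 96 * a - 8 := by linarith
    have bsq : (a : ℤ) ^ 2 ≥ 2 * a - 1 := by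
      have e1 : (0:ℤ) ≤ ((a : ℤ) - 1) ^ 2 := sq_nonneg _
      have e2 : ((a : ℤ) - 1) ^ 2 = (a : ℤ) ^ 2 - 2 * a + 1 := by ring
      linarith
    have hA : (a : ℤ) = 1 := by
      have : (a : ℤ) ≤ 1 := by linarith
      linarith
    rw [hA] at hz2
    have hfact : ((r : ℤ) - 1) * ((r : ℤ) - 11) = 0 := by linear_combination -hz2
    rcases mul_eq_zero.mp hfact with h | h
    · exfalso; linarith
    · have hr11 : r = 11 := by
        have : (r : ℤ) = 11 := by linarith
        exact_mod_cast this
      have ha1' : a = 1 := by exact_mod_cast hA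
      left
      exact ⟨hr11, by rw [ha, hr11, ha1', mul_one]⟩
  · -- case r ∣ m - 1, m - 1 = r * a
    have ha1 : 1 ≤ a := by
      rcases Nat.eq_zero_or_pos a with h | h
      · rw [h, mul_zero] at ha; omega
      · exact h
    have hma : m = r * a + 1 := by omega
    rw [hma] at keyN'
    have hsimp : (r * a + 1) * (r * a + 1 - 1) = (r * a + 1) * (r * a) := by
      rw [Nat.add_sub_cancel]
    rw [hsimp] at keyN'
    have hz : 12 * (((r : ℤ) * a + 1) * ((r : ℤ) * a)) + r = (r : ℤ) ^ 3 := by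
      exact_mod_cast keyN'
    have hA1 : (1 : ℤ) ≤ (a : ℤ) := by exact_mod_cast ha1
    have hz2 : 12 * ((a : ℤ) * ((r : ℤ) * a + 1)) + 1 = (r : ℤ) ^ 2 := by
      apply mul_left_cancel₀ hRne
      linear_combination hz
    have hK : (r : ℤ) * ((r : ℤ) - 12 * (a : ℤ) ^ 2) = 12 * a + 1 := by
      linear_combination -hz2
    have hKpos : 1 ≤ (r : ℤ) - 12 * (a : ℤ) ^ 2 := by
      by_contra h
      push_neg at h
      have e1 : (0:ℤ) ≤ (r : ℤ) * (-((r : ℤ) - 12 * (a : ℤ) ^ 2)) :=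
        mul_nonneg (by linarith) (by linarith)
      have e2 : (r : ℤ) * (-((r : ℤ) - 12 * (a : ℤ) ^ 2)) = -(12 * a + 1) := by
        linear_combination -hK
      linarith
    have b1 : (r : ℤ) ≤ 12 * a + 1 := by
      have e1 : (0:ℤ) ≤ (r : ℤ) * ((r : ℤ) - 12 * (a : ℤ) ^ 2 - 1) :=
        mul_nonneg (by linarith) (by linarith)
      have e2 : (r : ℤ) * ((r : ℤ) - 12 * (a : ℤ) ^ 2 - 1) = (12 * a + 1) - r := by
        linear_combination hK
      linarith
    have b3 : 12 * (a : ℤ) ^ 2 ≤ 12 * a := by linarith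
    have bsq : (a : ℤ) ^ 2 ≥ 2 * a - 1 := by
      have e1 : (0:ℤ) ≤ ((a : ℤ) - 1) ^ 2 := sq_nonneg _
      have e2 : ((a : ℤ) - 1) ^ 2 = (a : ℤ) ^ 2 - 2 * a + 1 := by ring
      linarith
    have hA : (a : ℤ) = 1 := by
      have : (a : ℤ) ≤ 1 := by linarith
      linarith
    rw [hA] at hz2
    have hfact : ((r : ℤ) + 1) * ((r : ℤ) - 13) = 0 := by linear_combination -hz2
    rcases mul_eq_zero.mp hfact with h | h
    · exfalso; linarith
    · have hr13 : r = 13 := by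
        have : (r : ℤ) = 13 := by linarith
        exact_mod_cast this
      have ha1' : a = 1 := by exact_mod_cast hA
      right
      exact ⟨hr13, by rw [hma, hr13, ha1', mul_one]⟩
end

section
/- For every prime r ≥ 7, if m is a positive integer with binomial(m,3) = (r³-r)/24, then a contradiction follows; i.e., there is no positive integer m with m(m-1)(m-2)/6 = (r³-r)/24. More precisely: for r ≥ 7, (r+1)r(r-1)/24 < (r-1)(r-2)(r-3)/8, so binomial(m,3) ≤ (r³-r)/24 forces m < r-1, and then r does not divide binomial(m,3), so equality is impossible. -/
/-- For a prime `r ≥ 7` : `(r+1)r(r-1)/24 < (r-1)(r-2)(r-3)/8`, so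
`binomial(m,3) ≤ (r³-r)/24` forces `m < r-1`, and there is no positive
integer `m` with `binomial(m,3) = (r³-r)/24`. -/
theorem stmt_3 (r : ℕ) (hr : r.Prime) (h7 : 7 ≤ r) :
    (r + 1) * r * (r - 1) / 24 < (r - 1) * (r - 2) * (r - 3) / 8 ∧
    (∀ m : ℕ, m.choose 3 ≤ (r ^ 3 - r) / 24 → m < r - 1) ∧
    ¬ ∃ m : ℕ, 0 < m ∧ m.choose 3 = (r ^ 3 - r) / 24 := by
  obtain ⟨k, rfl⟩ : ∃ k, r = k + 7 := ⟨r - 7, by omega⟩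
  set r := k + 7 with hrdef
  have h2 : r % 2 = 1 := by
    by_contra h
    rcases hr.eq_one_or_self_of_dvd 2 (by omega) with h' | h' <;> omega
  have h3 : r % 3 ≠ 0 := by
    intro h
    rcases hr.eq_one_or_self_of_dvd 3 (by omega) with h' | h' <;> omega
  have e1 : r - 1 = k + 6 := by omega
  have e2 : r - 2 = k + 5 := by omega
  have e3 : r - 3 = k + 4 := by omega
  -- k is even
  obtain ⟨j, rfl⟩ : ∃ j, k = 2 * j := ⟨k / 2, by omega⟩
  obtain ⟨t, ht⟩ : ∃ t, (j + 3) * (j + 4) = 2 * t := by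
    rcases Nat.even_mul_succ_self (j + 3) with ⟨u, hu⟩; exact ⟨u, by ring_nf at hu ⊢; omega⟩
  have h8 : (r + 1) * (r - 1) = 8 * t := by
    rw [e1, hrdef]
    have : (2 * j + 7 + 1) * (2 * j + 6) = 4 * ((j + 3) * (j + 4)) := by ring
    omega
  -- 3 divides t
  obtain ⟨q, hq⟩ : ∃ q, t = 3 * q := by
    have hdvd : (3 : ℕ) ∣ 8 * t := by
      rw [← h8]
      have : r % 3 = 1 ∨ r % 3 = 2 := by omega
      rcases this with h | h
      · exact Dvd.dvd.mul_left ⟨(r - 1) / 3, by omega⟩ _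
      · exact Dvd.dvd.mul_right ⟨(r + 1) / 3, by omega⟩ _
    exact Nat.Coprime.dvd_of_dvd_mul_left (by norm_num) hdvd
  have hA : (r + 1) * r * (r - 1) = 24 * (q * r) := by
    have h' : (r + 1) * r * (r - 1) = ((r + 1) * (r - 1)) * r := by ring
    rw [h', h8, hq]; ring
  -- 8 divides (r-1)*(r-3)
  obtain ⟨t', ht'⟩ : ∃ t', (j + 3) * (j + 2) = 2 * t' := by
    rcases Nat.even_mul_succ_self (j + 2) with ⟨u, hu⟩; exact ⟨u, by ring_nf at hu ⊢; omega⟩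
  have hB : (r - 1) * (r - 2) * (r - 3) = 8 * (t' * (r - 2)) := by
    have h13 : (r - 1) * (r - 3) = 8 * t' := by
      rw [e1, e3]
      have : (2 * j + 6) * (2 * j + 4) = 4 * ((j + 3) * (j + 2)) := by ring
      omega
    have h' : (r - 1) * (r - 2) * (r - 3) = ((r - 1) * (r - 3)) * (r - 2) := by ring
    rw [h', h13]; ring
  -- A < 3 * B
  have hlt : (r + 1) * r * (r - 1) < 3 * ((r - 1) * (r - 2) * (r - 3)) := by
    rw [e1, e2, e3, hrdef]; nlinarith [sq_nonneg j]
  have hab : q * r < t' * (r - 2) := by omega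
  have hcube : r ^ 3 - r = 24 * (q * r) := by
    have : r ^ 3 = (r + 1) * r * (r - 1) + r := by rw [e1, hrdef]; ring
    omega
  have hapos : 0 < q * r := by
    have h1 : 0 < (r + 1) * r * (r - 1) := by rw [e1, hrdef]; positivity
    rw [hA] at h1
    exact Nat.pos_of_ne_zero fun h0 => by rw [h0, Nat.mul_zero] at h1; exact absurd h1 (lt_irrefl 0)
  -- descFactorial fact
  have hdesc : ∀ n : ℕ, 6 * n.choose 3 = n * (n - 1) * (n - 2) := by
    intro n
    have h := Nat.descFactorial_eq_factorial_mul_choose n 3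
    have h2' : n.descFactorial 3 = n * (n - 1) * (n - 2) := by
      simp [Nat.descFactorial]; ring
    rw [h2'] at h
    norm_num [Nat.factorial] at h
    linarith
  have hkey : 8 * (t' * (r - 2)) = 6 * ((r - 1).choose 3) := by
    rw [hdesc, show r - 1 - 1 = r - 2 from by omega, show r - 1 - 2 = r - 3 from by omega, hB]
  refine ⟨?_, ?_, ?_⟩
  · rw [hA, hB, Nat.mul_div_cancel_left _ (by norm_num : (0:ℕ) < 24),
      Nat.mul_div_cancel_left _ (by norm_num : (0:ℕ) < 8)]
    exact hab
  · intro m hm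
    by_contra hc
    push_neg at hc
    have h1 : (r - 1).choose 3 ≤ m.choose 3 := Nat.choose_le_choose 3 hc
    rw [hcube, Nat.mul_div_cancel_left _ (by norm_num : (0:ℕ) < 24)] at hm
    omega
  · rintro ⟨m, hm0, hmeq⟩
    rw [hcube, Nat.mul_div_cancel_left _ (by norm_num : (0:ℕ) < 24)] at hmeq
    have hmlt : m < r - 1 := by
      by_contra hc
      push_neg at hc
      have h1 : (r - 1).choose 3 ≤ m.choose 3 := Nat.choose_le_choose 3 hc
      omega
    have hm3 : 3 ≤ m := by
      by_contra hc
      have : m.choose 3 = 0 := Nat.choose_eq_zero_of_lt (by omega)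
      omega
    have hrd : r ∣ m * (m - 1) * (m - 2) := by
      refine ⟨6 * q, ?_⟩
      rw [← hdesc m, hmeq]; ring
    rcases (Nat.Prime.dvd_mul hr).mp hrd with hd | hd
    · rcases (Nat.Prime.dvd_mul hr).mp hd with hd' | hd'
      · have := Nat.le_of_dvd (by omega) hd'; omega
      · have := Nat.le_of_dvd (by omega) hd'; omega
    · have := Nat.le_of_dvd (by omega) hd; omega
end

section
/- For a prime r ≥ 5, every non-trivial complex irreducible character χ of SL₂(F_r) satisfies χ(1) ≥ (r-1)/2; that is, the minimal dimension of a non-trivial irreducible complex representation of SL₂(F_r) is (r-1)/2. -/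
/-!
The unipotent element `u = !![1, 1; 0, 1]` has order `r`, and its normal closure is all of
`SL₂(F_r)`, so a non-trivial representation `ρ` has `ρ u ≠ 1`. As `ρ u` is annihilated by the
separable polynomial `X ^ r - 1`, it is diagonalizable, hence has an eigenvalue `ζ ≠ 1`, a
primitive `r`-th root of unity. Conjugating `u` by `diag(a, a⁻¹)` gives `u ^ (a²)`, so every
`ζ ^ (a²)` with `a ≠ 0` is an eigenvalue of `ρ u` as well: these are `(r - 1) / 2` distinct
eigenvalues.
-/

open Module Polynomial MatrixGroups Matrix.SpecialLinearGroup

namespace Matrix.SpecialLinearGroup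

theorem transvection_natCast_eq_pow {ι R : Type*} [DecidableEq ι] [Fintype ι] [CommRing R]
    {i j : ι} (hij : i ≠ j) (n : ℕ) :
    transvection hij (n : R) = transvection hij 1 ^ n := by
  induction n with
  | zero => simp [transvection_coeff_zero]
  | succ n ih => rw [Nat.cast_succ, transvection_add, ih, pow_succ]

theorem coe_transvection_zero_one {R : Type*} [CommRing R] (b : R) :
    (transvection zero_ne_one b : SL(2, R)) = !![1, b; 0, 1] := by
  ext i j; fin_cases i <;> fin_cases j <;> simp [transvection_coe]

theorem coe_transvection_one_zero {R : Type*} [CommRing R] (b : R) :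
    (transvection one_ne_zero b : SL(2, R)) = !![1, 0; b, 1] := by
  ext i j; fin_cases i <;> fin_cases j <;> simp [transvection_coe]

variable {F : Type*} [Field F]

theorem diag2_mul_transvection_mul_inv (a : F) (ha : a ≠ 0) (b : F) :
    diag2 a ha * transvection zero_ne_one b * (diag2 a ha)⁻¹ =
      transvection zero_ne_one (a ^ 2 * b) := by
  rw [diag2_inv]
  refine Subtype.ext ?_
  simp only [coe_mul, diag2_coe', coe_transvection_zero_one, mul_fin_two]
  ext i j; fin_cases i <;> fin_cases j <;> simp <;> field_simp

theorem transvection_one_zero_mem_of_forall_transvection_mem {N : Subgroup SL(2, F)} [N.Normal]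
    (hN : ∀ b, transvection zero_ne_one b ∈ N) (c : F) :
    transvection one_ne_zero c ∈ N := by
  let w : SL(2, F) := ⟨!![0, 1; -1, 0], by simp [det_fin_two]⟩
  have hw : w * transvection zero_ne_one (-c) = transvection one_ne_zero c * w := by
    refine Subtype.ext ?_
    simp only [coe_mul, coe_transvection_zero_one, coe_transvection_one_zero]
    simp [w]
  rw [← mul_inv_eq_of_eq_mul hw]
  exact Subgroup.Normal.conj_mem inferInstance _ (hN _) _

theorem eq_top_of_forall_transvection_mem {N : Subgroup SL(2, F)} [N.Normal]
    (hN : ∀ b, transvection zero_ne_one b ∈ N) : N = ⊤ := by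
  refine eq_top_iff.2 fun g _ => SL2.transvection_induction (· ∈ N) ?_ (fun _ _ => N.mul_mem) g
  intro i j hij c
  fin_cases i <;> fin_cases j
  · exact absurd rfl hij
  · exact hN c
  · exact transvection_one_zero_mem_of_forall_transvection_mem hN c
  · exact absurd rfl hij

theorem normalClosure_transvection_one_eq_top (p : ℕ) [Fact p.Prime] :
    Subgroup.normalClosure {(transvection zero_ne_one (1 : ZMod p) : SL(2, ZMod p))} = ⊤ := by
  refine eq_top_of_forall_transvection_mem fun b => ?_
  have h := Subgroup.pow_mem (Subgroup.normalClosure _) (Subgroup.subset_normalClosure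
    (Set.mem_singleton (transvection zero_ne_one (1 : ZMod p) : SL(2, ZMod p)))) b.val
  rwa [← transvection_natCast_eq_pow, ZMod.natCast_zmod_val] at h

end Matrix.SpecialLinearGroup

namespace Module.End

variable {K V : Type*} [Field K] [AddCommGroup V] [Module K V] [FiniteDimensional K V]

theorem exists_hasEigenvalue_ne_one_of_pow_eq_one [IsAlgClosed K] {f : End K V} {n : ℕ}
    (hn : (n : K) ≠ 0) (hfn : f ^ n = 1) (hf : f ≠ 1) : ∃ μ ≠ 1, f.HasEigenvalue μ := by
  by_contra! h
  have hss : f.IsSemisimple := isSemisimple_of_squarefree_aeval_eq_zero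
    (separable_X_pow_sub_C 1 hn one_ne_zero).squarefree (by simp [hfn])
  suffices f.eigenspace 1 = ⊤ from hf <| LinearMap.ext fun v => by
    simpa using mem_eigenspace_iff.1 (this ▸ Submodule.mem_top : v ∈ f.eigenspace 1)
  rw [← hss.iSup_eigenspace_eq_top]
  refine le_antisymm (le_iSup _ 1) (iSup_le fun μ => ?_)
  rcases eq_or_ne μ 1 with rfl | hμ
  · exact le_rfl
  · simp [not_not.mp (hasEigenvalue_iff.not.mp (h μ hμ))]

theorem card_le_finrank_of_forall_hasEigenvalue (f : End K V) (s : Finset K)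
    (hs : ∀ μ ∈ s, f.HasEigenvalue μ) : s.card ≤ finrank K V := by
  choose v hv using fun μ : s => (hs μ μ.2).exists_hasEigenvector
  simpa using (f.eigenvectors_linearIndependent (s : Set K) v hv).fintype_card_le_finrank

end Module.End

theorem FiniteField.card_sub_one_div_two_le_card_image_sq (F : Type*) [Field F] [Fintype F]
    [DecidableEq F] :
    (Fintype.card F - 1) / 2 ≤ ((Finset.univ.erase (0 : F)).image (· ^ 2)).card := by
  have hfiber : ∀ b ∈ (Finset.univ.erase (0 : F)).image (· ^ 2),
      ((Finset.univ.erase (0 : F)).filter (· ^ 2 = b)).card ≤ 2 := by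
    intro b _
    calc _ ≤ (nthRoots 2 b).toFinset.card :=
          Finset.card_le_card fun a ha => by simpa [mem_nthRoots] using (Finset.mem_filter.1 ha).2
      _ ≤ 2 := (Multiset.toFinset_card_le _).trans (card_nthRoots 2 b)
  have := Finset.card_le_mul_card_image _ 2 hfiber
  rw [Finset.card_erase_of_mem (Finset.mem_univ _), Finset.card_univ] at this
  omega

theorem AddChar.zmodChar_injective {C : Type*} [CommMonoid C] {n : ℕ} [NeZero n] {ζ : C}
    (hζ : IsPrimitiveRoot ζ n) : Function.Injective (zmodChar n hζ.pow_eq_one) := by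
  intro a b hab
  simp only [zmodChar_apply] at hab
  exact ZMod.val_injective n (hζ.pow_inj (ZMod.val_lt a) (ZMod.val_lt b) hab)

namespace Representation

variable {k G V : Type*} [CommRing k] [AddCommGroup V] [Module k V]

theorem hasEigenvector_mul_mul_inv [Group G] (ρ : Representation k G V) (g : G) {h : G} {μ : k}
    {v : V} (hv : End.HasEigenvector (ρ h) μ v) :
    End.HasEigenvector (ρ (g * h * g⁻¹)) μ (ρ g v) := by
  refine End.hasEigenvector_iff.2 ⟨End.mem_eigenspace_iff.2 ?_, fun h0 => hv.2 ?_⟩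
  · simp [End.mul_apply, hv.apply_eq_smul]
  · simpa using congrArg (ρ g⁻¹) h0

variable {p : ℕ} [Fact p.Prime] (ρ : Representation k SL(2, ZMod p) V)

theorem eq_one_of_apply_transvection_one_eq_one (h : ρ (transvection zero_ne_one 1) = 1)
    (g : SL(2, ZMod p)) : ρ g = 1 := by
  have hker : Subgroup.normalClosure {(transvection zero_ne_one 1 : SL(2, ZMod p))} ≤ ρ.ker :=
    Subgroup.normalClosure_le_normal (by simpa using h)
  rw [normalClosure_transvection_one_eq_top, top_le_iff] at hker
  exact ρ.mem_ker.1 (hker ▸ Subgroup.mem_top g)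

theorem hasEigenvalue_zmodChar_sq {ζ : k} (hζ : ζ ^ p = 1) {v : V}
    (hv : End.HasEigenvector (ρ (transvection zero_ne_one 1)) ζ v) {a : ZMod p} (ha : a ≠ 0) :
    End.HasEigenvalue (ρ (transvection zero_ne_one 1)) (AddChar.zmodChar p hζ (a ^ 2)) := by
  have hvt : ∀ t,
      End.HasEigenvector (ρ (transvection zero_ne_one t)) (AddChar.zmodChar p hζ t) v := by
    intro t
    have ht : (transvection zero_ne_one t : SL(2, ZMod p)) =
        transvection zero_ne_one 1 ^ t.val := by
      rw [← transvection_natCast_eq_pow, ZMod.natCast_zmod_val]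
    refine End.hasEigenvector_iff.2 ⟨End.mem_eigenspace_iff.2 ?_, hv.2⟩
    rw [ht, map_pow, hv.pow_apply, AddChar.zmodChar_apply]
  have := ρ.hasEigenvector_mul_mul_inv (diag2 a⁻¹ (inv_ne_zero ha)) (hvt (a ^ 2))
  rw [diag2_mul_transvection_mul_inv, inv_pow, inv_mul_cancel₀ (pow_ne_zero 2 ha)] at this
  exact End.hasEigenvalue_of_hasEigenvector this

end Representation

theorem stmt_5_general (r : ℕ) (hr : r.Prime)
    {V : Type} [AddCommGroup V] [Module ℂ V] [FiniteDimensional ℂ V]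
    (ρ : Representation ℂ (Matrix.SpecialLinearGroup (Fin 2) (ZMod r)) V)
    (hnt : ∃ g : Matrix.SpecialLinearGroup (Fin 2) (ZMod r), ρ g ≠ 1) :
    (r - 1) / 2 ≤ Module.finrank ℂ V := by
  have := Fact.mk hr
  classical
  set f := ρ (transvection zero_ne_one 1)
  have hf : f ≠ 1 := fun h =>
    hnt.elim fun g hg => hg (ρ.eq_one_of_apply_transvection_one_eq_one h g)
  have hfr : f ^ r = 1 := by
    rw [← map_pow, ← transvection_natCast_eq_pow, ZMod.natCast_self, transvection_coeff_zero,
      map_one]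
  obtain ⟨ζ, hζ1, hζ⟩ := End.exists_hasEigenvalue_ne_one_of_pow_eq_one
    (by exact_mod_cast hr.ne_zero) hfr hf
  obtain ⟨v, hv⟩ := hζ.exists_hasEigenvector
  have hζr : ζ ^ r = 1 :=
    smul_left_injective ℂ hv.2 (by simpa [hfr] using (hv.pow_apply r).symm)
  have hprim : IsPrimitiveRoot ζ r := orderOf_eq_prime hζr hζ1 ▸ IsPrimitiveRoot.orderOf ζ
  set squares := (Finset.univ.erase (0 : ZMod r)).image (· ^ 2)
  calc (r - 1) / 2 ≤ squares.card := by
        simpa using FiniteField.card_sub_one_div_two_le_card_image_sq (ZMod r)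
    _ = (squares.image (AddChar.zmodChar r hprim.pow_eq_one)).card :=
        (Finset.card_image_of_injective _ (AddChar.zmodChar_injective hprim)).symm
    _ ≤ finrank ℂ V := End.card_le_finrank_of_forall_hasEigenvalue f _ <| by
        simp only [squares, Finset.mem_image, Finset.mem_erase]
        rintro μ ⟨_, ⟨a, ⟨ha, -⟩, rfl⟩, rfl⟩
        exact ρ.hasEigenvalue_zmodChar_sq hprim.pow_eq_one hv ha

/-- For a prime `r ≥ 5`, every non-trivial irreducible complex representation of
`SL₂(F_r)` has dimension at least `(r-1)/2`. -/
theorem stmt_5 (r : ℕ) (hr : r.Prime) (h5 : 5 ≤ r)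
    {V : Type} [AddCommGroup V] [Module ℂ V] [FiniteDimensional ℂ V] [Nontrivial V]
    (ρ : Representation ℂ (Matrix.SpecialLinearGroup (Fin 2) (ZMod r)) V)
    (hirr : ∀ p : Submodule ℂ V,
      (∀ g : Matrix.SpecialLinearGroup (Fin 2) (ZMod r), ∀ v ∈ p, ρ g v ∈ p) →
        p = ⊥ ∨ p = ⊤)
    (hnt : ∃ g : Matrix.SpecialLinearGroup (Fin 2) (ZMod r), ρ g ≠ 1) :
    (r - 1) / 2 ≤ Module.finrank ℂ V :=
  stmt_5_general r hr ρ hnt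
end

section
/- Let r ≥ 5 be prime and for j = 1, ..., (r-1)/2 set α_j = (r/4)·csc²(2πj/r). Then each α_j > 1, and consequently for all g ≥ 3, the Verlinde dimension d_g = Σ_j α_j^{g-1} satisfies d_{g+1} = Σ_j α_j^g ≤ Σ_j α_j^{3(g-1)/2} < d_g^{3/2} < binomial(d_g, 2). -/
open Real

/-- The Verlinde weights `α_j = (r/4)·csc²(2πj/r)`, `1 ≤ j ≤ (r-1)/2`. -/
noncomputable def tqftAlpha (r j : ℕ) : ℝ := r / (4 * Real.sin (2 * Real.pi * j / r) ^ 2)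

/-- The Verlinde dimension `d_g = Σ_j α_j^{g-1}` of the genus-`g` `SO(3)` TQFT space. -/
noncomputable def tqftDim (r g : ℕ) : ℝ :=
  ∑ j ∈ Finset.Icc 1 ((r - 1) / 2), tqftAlpha r j ^ (g - 1)

/-- For a prime `r ≥ 5`, each `α_j > 1`, and for `g ≥ 3`,
`d_{g+1} ≤ Σ_j α_j^{3(g-1)/2} < d_g^{3/2} < binomial(d_g, 2)`. -/
theorem stmt_10 (r : ℕ) (hr : r.Prime) (h5 : 5 ≤ r) :
    (∀ j ∈ Finset.Icc 1 ((r - 1) / 2), 1 < tqftAlpha r j) ∧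
    ∀ g : ℕ, 3 ≤ g →
      tqftDim r (g + 1) ≤
        (∑ j ∈ Finset.Icc 1 ((r - 1) / 2), tqftAlpha r j ^ (((3 * (g - 1) : ℕ) : ℝ) / 2)) ∧
      (∑ j ∈ Finset.Icc 1 ((r - 1) / 2), tqftAlpha r j ^ (((3 * (g - 1) : ℕ) : ℝ) / 2)) <
        tqftDim r g ^ ((3 : ℝ) / 2) ∧
      tqftDim r g ^ ((3 : ℝ) / 2) < tqftDim r g * (tqftDim r g - 1) / 2 := by
  have hrR : (5 : ℝ) ≤ r := by exact_mod_cast h5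
  have hr0 : (0 : ℝ) < r := by linarith
  set m := (r - 1) / 2 with hm
  have hrodd : Odd r := hr.odd_of_ne_two (by omega)
  have h2m : 2 * m = r - 1 := by
    obtain ⟨k, hk⟩ := hrodd; omega
  have hmR : (2 : ℝ) * m = (r : ℝ) - 1 := by
    have : ((2 * m : ℕ) : ℝ) = ((r - 1 : ℕ) : ℝ) := by rw [h2m]
    push_cast [Nat.cast_sub (by omega : 1 ≤ r)] at this
    linarith
  have hm2 : 2 ≤ m := by omega
  -- sin positivity on Icc
  have hsin : ∀ j ∈ Finset.Icc 1 m, 0 < Real.sin (2 * π * j / r) := by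
    intro j hj
    rw [Finset.mem_Icc] at hj
    have hj1 : (1 : ℝ) ≤ j := by exact_mod_cast hj.1
    have hjm : (j : ℝ) ≤ m := by exact_mod_cast hj.2
    apply Real.sin_pos_of_pos_of_lt_pi
    · positivity
    · rw [div_lt_iff₀ hr0]
      nlinarith [Real.pi_pos]
  have halpha : ∀ j ∈ Finset.Icc 1 m, 1 < tqftAlpha r j := by
    intro j hj
    have hs := hsin j hj
    have hs1 : Real.sin (2 * π * j / r) ^ 2 ≤ 1 := Real.sin_sq_le_one _
    rw [tqftAlpha, lt_div_iff₀ (by positivity)]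
    nlinarith
  refine ⟨halpha, fun g hg => ?_⟩
  -- lower bound on α_m
  have hangle : 2 * π * m / r = π - π / r := by
    field_simp
    nlinarith [Real.pi_pos]
  have hmmem : m ∈ Finset.Icc 1 m := Finset.mem_Icc.2 ⟨by omega, le_rfl⟩
  have hsp : 0 < Real.sin (π / r) := by
    have := hsin m hmmem
    rwa [hangle, Real.sin_pi_sub] at this
  have halpham : 3 ≤ tqftAlpha r m := by
    have hsr : Real.sin (π / r) ≤ π / r := Real.sin_le (by positivity)
    rw [tqftAlpha, hangle, Real.sin_pi_sub, le_div_iff₀ (by positivity)]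
    have h1 : Real.sin (π / r) * r ≤ π := by
      rw [← le_div_iff₀ hr0] at *; exact hsr
    nlinarith [Real.pi_lt_d2, Real.pi_pos, sq_nonneg (Real.sin (π / r) * r)]
  -- positivity / basic facts
  have hpow_pos : ∀ j ∈ Finset.Icc 1 m, (0 : ℝ) < tqftAlpha r j ^ (g - 1) := by
    intro j hj; exact pow_pos (lt_trans one_pos (halpha j hj)) _
  have hd9 : 9 ≤ tqftDim r g := by
    have hterm : (9 : ℝ) ≤ tqftAlpha r m ^ (g - 1) := by
      calc (9 : ℝ) = 3 ^ 2 := by norm_num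
        _ ≤ tqftAlpha r m ^ 2 := by nlinarith
        _ ≤ tqftAlpha r m ^ (g - 1) :=
            pow_le_pow_right₀ (by linarith) (by omega)
    calc (9 : ℝ) ≤ tqftAlpha r m ^ (g - 1) := hterm
      _ ≤ tqftDim r g := Finset.single_le_sum (fun j hj => le_of_lt (hpow_pos j hj)) hmmem
  have hdpos : 0 < tqftDim r g := by linarith
  -- each term < sum
  have hlt_sum : ∀ j ∈ Finset.Icc 1 m, tqftAlpha r j ^ (g - 1) < tqftDim r g := by
    intro j hj
    rcases eq_or_ne j 1 with h1 | h1
    · exact Finset.single_lt_sum (by omega : (2:ℕ) ≠ j) hj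
        (Finset.mem_Icc.2 ⟨by omega, hm2⟩) (hpow_pos 2 (Finset.mem_Icc.2 ⟨by omega, hm2⟩))
        (fun k hk _ => le_of_lt (hpow_pos k hk))
    · exact Finset.single_lt_sum (Ne.symm h1) hj
        (Finset.mem_Icc.2 ⟨le_rfl, by omega⟩)
        (hpow_pos 1 (Finset.mem_Icc.2 ⟨le_rfl, by omega⟩))
        (fun k hk _ => le_of_lt (hpow_pos k hk))
  have hg1 : 1 ≤ g := by omega
  have hcast : ((3 * (g - 1) : ℕ) : ℝ) = 3 * ((g : ℝ) - 1) := by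
    push_cast [Nat.cast_sub hg1]; ring
  have hgR : (3 : ℝ) ≤ g := by exact_mod_cast hg
  refine ⟨?_, ?_, ?_⟩
  · -- first inequality
    rw [tqftDim, Nat.add_sub_cancel]
    apply Finset.sum_le_sum
    intro j hj
    have ha := halpha j hj
    calc tqftAlpha r j ^ g = tqftAlpha r j ^ (g : ℝ) := by
          rw [Real.rpow_natCast]
      _ ≤ tqftAlpha r j ^ (((3 * (g - 1) : ℕ) : ℝ) / 2) := by
          apply Real.rpow_le_rpow_of_exponent_le (le_of_lt ha)
          rw [hcast]; linarith
  · -- second inequality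
    have key : ∀ j ∈ Finset.Icc 1 m,
        tqftAlpha r j ^ (((3 * (g - 1) : ℕ) : ℝ) / 2)
          < tqftAlpha r j ^ (g - 1) * tqftDim r g ^ ((1 : ℝ) / 2) := by
      intro j hj
      have ha0 : (0 : ℝ) < tqftAlpha r j := lt_trans one_pos (halpha j hj)
      have heq : tqftAlpha r j ^ (((3 * (g - 1) : ℕ) : ℝ) / 2)
          = tqftAlpha r j ^ (g - 1) * (tqftAlpha r j ^ (g - 1)) ^ ((1 : ℝ) / 2) := by
        rw [← Real.rpow_natCast (tqftAlpha r j) (g - 1), ← Real.rpow_mul (le_of_lt ha0),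
          ← Real.rpow_add ha0]
        congr 1
        push_cast [Nat.cast_sub hg1]
        ring
      rw [heq]
      apply mul_lt_mul_of_pos_left _ (hpow_pos j hj)
      exact Real.rpow_lt_rpow (le_of_lt (hpow_pos j hj)) (hlt_sum j hj) (by norm_num)
    calc (∑ j ∈ Finset.Icc 1 m, tqftAlpha r j ^ (((3 * (g - 1) : ℕ) : ℝ) / 2))
        < ∑ j ∈ Finset.Icc 1 m, tqftAlpha r j ^ (g - 1) * tqftDim r g ^ ((1 : ℝ) / 2) :=
          Finset.sum_lt_sum_of_nonempty ⟨1, Finset.mem_Icc.2 ⟨le_rfl, by omega⟩⟩ key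
      _ = tqftDim r g * tqftDim r g ^ ((1 : ℝ) / 2) := by
          rw [← Finset.sum_mul]; rfl
      _ = tqftDim r g ^ ((3 : ℝ) / 2) := by
          rw [show (3 : ℝ) / 2 = 1 + 1 / 2 by norm_num, Real.rpow_add hdpos, Real.rpow_one]
  · -- third inequality
    have hsqrt : Real.sqrt (tqftDim r g) < (tqftDim r g - 1) / 2 := by
      rw [Real.sqrt_lt' (by linarith)]
      nlinarith
    calc tqftDim r g ^ ((3 : ℝ) / 2)
        = tqftDim r g * Real.sqrt (tqftDim r g) := by
          rw [show (3 : ℝ) / 2 = 1 + 1 / 2 by norm_num, Real.rpow_add hdpos, Real.rpow_one,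
            Real.sqrt_eq_rpow]
      _ < tqftDim r g * ((tqftDim r g - 1) / 2) := by
          exact mul_lt_mul_of_pos_left hsqrt hdpos
      _ = tqftDim r g * (tqftDim r g - 1) / 2 := by ring
end

section
/- For a prime r > 7, the quantity binomial(d₂, 2) − d₃ equals (r+5)(r+3)(r+1)r(r-1)(r-8)/5760 and is positive, where d₂ = Σ_{j=1}^{(r-1)/2} α_j and d₃ = Σ_{j=1}^{(r-1)/2} α_j², with α_j = (r/4)csc²(2πj/r). In particular d₃ < binomial(d₂, 2) for primes r > 7. -/
open Real

/-!
For an `r`-th root of unity `z = exp (2iθ) ≠ 1` put `w = (1 - z)⁻¹`; then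
`1 / (4 sin² θ) = -z / (1 - z)² = w (1 - w)`. The moments `Mₙ(z) = ∑_{a<r} C(a, n) zᵃ` satisfy
`Mₙ₊₁ = (w - 1) Mₙ - C(r, n + 1) w` with `M₀ = 0`, so `Mₙ` is a polynomial in `w` with leading
term `-r wⁿ`. Summed over all `r`-th roots of unity, `Mₙ` vanishes for `n ≥ 1` (orthogonality),
and `Mₙ(1) = C(r, n + 1)`; inverting this triangular system gives
`∑_{k=1}^{r-1} 1 / (4 sin² (πk/r)) = (r² - 1) / 12` and the sum of the squares
`(r² - 1)(r² + 11) / 720`. For odd `r` the terms `k` and `r - k` of the Verlinde sums coincide,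
so `d₂ = r (r² - 1) / 24` and `d₃ = r² (r² - 1)(r² + 11) / 1440`, and `binomial(d₂, 2) - d₃` is
the stated polynomial, positive since `r ≥ 9`.
-/

open Finset

section BinomialMoment

variable {K : Type*} [Field K]

def binomialMoment (r n : ℕ) (z : K) : K := ∑ a ∈ range r, (a.choose n : K) * z ^ a

theorem one_sub_mul_binomialMoment_succ (r n : ℕ) (z : K) :
    (1 - z) * binomialMoment r (n + 1) z = z * binomialMoment r n z - r.choose (n + 1) * z ^ r := by
  induction r with
  | zero => simp [binomialMoment]
  | succ r ih =>
    simp only [binomialMoment, sum_range_succ] at ih ⊢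
    rw [Nat.choose_succ_succ', Nat.cast_add]
    linear_combination ih

theorem binomialMoment_one (r n : ℕ) : binomialMoment r n (1 : K) = r.choose (n + 1) := by
  linear_combination (one_sub_mul_binomialMoment_succ r n (1 : K)).symm

theorem geom_sum_eq_zero_of_pow_eq_one {r : ℕ} {x : K} (hx : x ^ r = 1) (hx1 : x ≠ 1) :
    ∑ k ∈ range r, x ^ k = 0 := by
  rw [geom_sum_eq hx1, hx, sub_self, zero_div]

theorem binomialMoment_succ_of_pow_eq_one {r : ℕ} {z : K} (hz : z ^ r = 1) (hz1 : z ≠ 1)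
    (n : ℕ) :
    binomialMoment r (n + 1) z =
      ((1 - z)⁻¹ - 1) * binomialMoment r n z - r.choose (n + 1) * (1 - z)⁻¹ := by
  have h := one_sub_mul_binomialMoment_succ r n z
  rw [hz] at h
  have : 1 - z ≠ 0 := sub_ne_zero.mpr hz1.symm
  field_simp
  linear_combination h

theorem IsPrimitiveRoot.sum_binomialMoment_succ {r : ℕ} {ζ : K} (hζ : IsPrimitiveRoot ζ r)
    (n : ℕ) : ∑ k ∈ range r, binomialMoment r (n + 1) (ζ ^ k) = 0 := by
  simp only [binomialMoment, ← pow_mul]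
  rw [sum_comm]
  refine sum_eq_zero fun a ha => ?_
  rcases Nat.eq_zero_or_pos a with rfl | ha0
  · simp
  simp only [mul_comm _ a, pow_mul, ← mul_sum]
  rw [geom_sum_eq_zero_of_pow_eq_one (by rw [pow_right_comm, hζ.pow_eq_one, one_pow])
    (hζ.pow_ne_one_of_pos_of_lt ha0.ne' (mem_range.mp ha)), mul_zero]

theorem IsPrimitiveRoot.sum_Ico_binomialMoment_succ {r : ℕ} {ζ : K} (hζ : IsPrimitiveRoot ζ r)
    (hr : 0 < r) (n : ℕ) :
    ∑ k ∈ Ico 1 r, binomialMoment r (n + 1) (ζ ^ k) = -(r.choose (n + 2)) := by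
  have h := hζ.sum_binomialMoment_succ n
  rw [sum_range_eq_add_Ico _ hr, pow_zero, binomialMoment_one] at h
  linear_combination h

theorem neg_div_one_sub_sq_eq_binomialMoment [CharZero K] {r : ℕ} {z : K} (hz : z ^ r = 1)
    (hz1 : z ≠ 1) (hr : (r : K) ≠ 0) :
    -z / (1 - z) ^ 2 = (binomialMoment r 2 z + (1 - r) / 2 * binomialMoment r 1 z) / r ∧
    (-z / (1 - z) ^ 2) ^ 2 = (-binomialMoment r 4 z + (r - 3) / 2 * binomialMoment r 3 z
        - (r - 1) * (r - 5) / 12 * binomialMoment r 2 z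
        - (r ^ 2 - 1) / 24 * binomialMoment r 1 z) / r := by
  have step := binomialMoment_succ_of_pow_eq_one hz hz1
  have h0 : binomialMoment r 0 z = 0 := by
    simpa [binomialMoment] using geom_sum_eq_zero_of_pow_eq_one hz hz1
  have h1 : binomialMoment r 1 z = _ := step 0
  have h2 : binomialMoment r 2 z = _ := step 1
  have h3 : binomialMoment r 3 z = _ := step 2
  have h4 : binomialMoment r 4 z = _ := step 3
  rw [h4, h3, h2, h1, h0]
  norm_num [Nat.cast_choose_eq_descPochhammer_div K r, descPochhammer_succ_right, Nat.factorial]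
  have : 1 - z ≠ 0 := sub_ne_zero.mpr hz1.symm
  constructor <;> field_simp <;> ring

theorem IsPrimitiveRoot.sum_neg_div_one_sub_sq [CharZero K] {r : ℕ} {ζ : K}
    (hζ : IsPrimitiveRoot ζ r) (hr : 0 < r) :
    ∑ k ∈ Ico 1 r, -ζ ^ k / (1 - ζ ^ k) ^ 2 = ((r : K) ^ 2 - 1) / 12 ∧
    ∑ k ∈ Ico 1 r, (-ζ ^ k / (1 - ζ ^ k) ^ 2) ^ 2
      = ((r : K) ^ 2 - 1) * (r ^ 2 + 11) / 720 := by
  have hr0 : (r : K) ≠ 0 := Nat.cast_ne_zero.mpr hr.ne'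
  have hexp (k) (hk : k ∈ Ico 1 r) := neg_div_one_sub_sq_eq_binomialMoment
    (by rw [pow_right_comm, hζ.pow_eq_one, one_pow] : (ζ ^ k) ^ r = 1)
    (hζ.pow_ne_one_of_pos_of_lt (by grind) (by grind)) hr0
  rw [sum_congr rfl fun k hk => (hexp k hk).1, sum_congr rfl fun k hk => (hexp k hk).2]
  simp only [← sum_div, sum_add_distrib, sum_sub_distrib, sum_neg_distrib, ← mul_sum,
    hζ.sum_Ico_binomialMoment_succ hr 0, hζ.sum_Ico_binomialMoment_succ hr 1,
    hζ.sum_Ico_binomialMoment_succ hr 2, hζ.sum_Ico_binomialMoment_succ hr 3]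
  norm_num [Nat.cast_choose_eq_descPochhammer_div K r, descPochhammer_succ_right, Nat.factorial]
  constructor <;> field_simp <;> ring

end BinomialMoment

theorem Complex.ofReal_inv_four_mul_sin_sq (θ : ℝ) :
    (((4 * Real.sin θ ^ 2)⁻¹ : ℝ) : ℂ) =
      -Complex.exp (2 * θ * Complex.I) / (1 - Complex.exp (2 * θ * Complex.I)) ^ 2 := by
  set u := Complex.exp (θ * Complex.I)
  have hu : u ≠ 0 := Complex.exp_ne_zero _
  have hexp : Complex.exp (2 * θ * Complex.I) = u ^ 2 := by
    rw [← Complex.exp_nat_mul]; congr 1; push_cast; ring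
  have hsin : (Real.sin θ : ℂ) = (u⁻¹ - u) * Complex.I / 2 := by
    rw [Complex.ofReal_sin, Complex.sin, ← Complex.exp_neg, neg_mul]
  have hsq : (1 - u ^ 2) ^ 2 = -(4 * (Real.sin θ : ℂ) ^ 2) * u ^ 2 := by
    rw [hsin, div_pow, mul_pow, Complex.I_sq]; field_simp; ring
  rw [hexp, hsq, neg_mul, neg_div_neg_eq, mul_comm _ (u ^ 2),
    div_mul_cancel_left₀ (pow_ne_zero 2 hu)]
  norm_cast

theorem sum_inv_four_mul_sin_sq {r i : ℕ} (hr : 0 < r) (hi : i.Coprime r) :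
    ∑ k ∈ Ico 1 r, (4 * Real.sin (i * π * k / r) ^ 2)⁻¹ = ((r : ℝ) ^ 2 - 1) / 12 ∧
    ∑ k ∈ Ico 1 r, ((4 * Real.sin (i * π * k / r) ^ 2)⁻¹) ^ 2
      = ((r : ℝ) ^ 2 - 1) * (r ^ 2 + 11) / 720 := by
  have hζ := Complex.isPrimitiveRoot_exp_of_coprime i r hr.ne' hi
  have hterm (k : ℕ) : (((4 * Real.sin (i * π * k / r) ^ 2)⁻¹ : ℝ) : ℂ) =
      -(Complex.exp (2 * π * Complex.I * (i / r))) ^ k /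
        (1 - (Complex.exp (2 * π * Complex.I * (i / r))) ^ k) ^ 2 := by
    have hexp : Complex.exp (2 * ((i * π * k / r : ℝ) : ℂ) * Complex.I) =
        Complex.exp (2 * π * Complex.I * (i / r)) ^ k := by
      rw [← Complex.exp_nat_mul]; congr 1; push_cast; ring
    rw [Complex.ofReal_inv_four_mul_sin_sq, hexp]
  obtain ⟨h1, h2⟩ := hζ.sum_neg_div_one_sub_sq hr
  simp only [← hterm] at h1 h2
  exact ⟨by exact_mod_cast h1, by exact_mod_cast h2⟩

theorem sum_Ico_one_two_mul_add_one_of_reflect {M : Type*} [AddCommMonoid M] (f : ℕ → M)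
    (m : ℕ) (hf : ∀ k ∈ Icc 1 m, f (2 * m + 1 - k) = f k) :
    ∑ k ∈ Ico 1 (2 * m + 1), f k = ∑ k ∈ Icc 1 m, f k + ∑ k ∈ Icc 1 m, f k := by
  have hreflect := sum_Ico_reflect f 1 (show m + 1 ≤ 2 * m + 1 + 1 by omega)
  rw [show 2 * m + 1 + 1 - (m + 1) = m + 1 by omega, show 2 * m + 1 + 1 - 1 = 2 * m + 1 by omega,
    Ico_add_one_right_eq_Icc, sum_congr rfl hf] at hreflect
  rw [← sum_Ico_consecutive f (show 1 ≤ m + 1 by omega) (show m + 1 ≤ 2 * m + 1 by omega),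
    Ico_add_one_right_eq_Icc, hreflect]

theorem tqftAlpha_sub {r k : ℕ} (hk : k ≤ r) : tqftAlpha r (r - k) = tqftAlpha r k := by
  obtain rfl | hr := Nat.eq_zero_or_pos r
  · rw [Nat.le_zero.mp hk]
  have harg : 2 * π * ((r - k : ℕ) : ℝ) / r = 2 * π - 2 * π * k / r := by
    rw [Nat.cast_sub hk]; field_simp
  rw [tqftAlpha, tqftAlpha, harg, sin_two_pi_sub, neg_sq]

theorem sum_Ico_tqftAlpha {r : ℕ} (hr : Odd r) :
    ∑ k ∈ Ico 1 r, tqftAlpha r k = r * ((r : ℝ) ^ 2 - 1) / 12 ∧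
    ∑ k ∈ Ico 1 r, tqftAlpha r k ^ 2
      = (r : ℝ) ^ 2 * ((r : ℝ) ^ 2 - 1) * (r ^ 2 + 11) / 720 := by
  obtain ⟨h1, h2⟩ := sum_inv_four_mul_sin_sq hr.pos (Nat.coprime_two_left.mpr hr)
  simp only [Nat.cast_ofNat] at h1 h2
  simp only [tqftAlpha, div_eq_mul_inv (r : ℝ), mul_pow, ← mul_sum, h1, h2]
  constructor <;> ring

theorem sum_Icc_tqftAlpha {r : ℕ} (hr : Odd r) :
    ∑ j ∈ Icc 1 ((r - 1) / 2), tqftAlpha r j = r * ((r : ℝ) ^ 2 - 1) / 24 ∧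
    ∑ j ∈ Icc 1 ((r - 1) / 2), tqftAlpha r j ^ 2
      = (r : ℝ) ^ 2 * ((r : ℝ) ^ 2 - 1) * (r ^ 2 + 11) / 1440 := by
  obtain ⟨m, rfl⟩ := hr
  have hsymm (k : ℕ) (hk : k ∈ Icc 1 m) :
      tqftAlpha (2 * m + 1) (2 * m + 1 - k) = tqftAlpha (2 * m + 1) k :=
    tqftAlpha_sub (by grind)
  obtain ⟨h1, h2⟩ := sum_Ico_tqftAlpha (odd_two_mul_add_one m)
  rw [sum_Ico_one_two_mul_add_one_of_reflect _ m hsymm] at h1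
  rw [sum_Ico_one_two_mul_add_one_of_reflect (tqftAlpha (2 * m + 1) · ^ 2) m
    (fun k hk => by rw [hsymm k hk])] at h2
  rw [show (2 * m + 1 - 1) / 2 = m by omega]
  constructor <;> linarith

/-- For a prime `r > 7`, with `d₂ = Σ_j α_j` and `d₃ = Σ_j α_j²`,
`binomial(d₂,2) − d₃ = (r+5)(r+3)(r+1)r(r-1)(r-8)/5760 > 0`; in particular
`d₃ < binomial(d₂, 2)`. -/
theorem stmt_11 (r : ℕ) (hr : r.Prime) (h7 : 7 < r) :
    (∑ j ∈ Finset.Icc 1 ((r - 1) / 2), tqftAlpha r j) *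
        ((∑ j ∈ Finset.Icc 1 ((r - 1) / 2), tqftAlpha r j) - 1) / 2 -
      (∑ j ∈ Finset.Icc 1 ((r - 1) / 2), tqftAlpha r j ^ 2)
    = ((r : ℝ) + 5) * ((r : ℝ) + 3) * ((r : ℝ) + 1) * r * ((r : ℝ) - 1) * ((r : ℝ) - 8) / 5760 ∧
    (∑ j ∈ Finset.Icc 1 ((r - 1) / 2), tqftAlpha r j ^ 2) <
      (∑ j ∈ Finset.Icc 1 ((r - 1) / 2), tqftAlpha r j) *
        ((∑ j ∈ Finset.Icc 1 ((r - 1) / 2), tqftAlpha r j) - 1) / 2 := by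
  have hodd : Odd r := hr.odd_of_ne_two (by omega)
  obtain ⟨hd₂, hd₃⟩ := sum_Icc_tqftAlpha hodd
  have hr9 : (9 : ℝ) ≤ r := by
    obtain ⟨m, rfl⟩ := hodd
    exact_mod_cast (show 9 ≤ 2 * m + 1 by omega)
  have hr8 : (0 : ℝ) < r - 8 := by linarith
  have hr1 : (0 : ℝ) < r - 1 := by linarith
  have hpos : (0 : ℝ) < (r + 5) * (r + 3) * (r + 1) * r * (r - 1) * (r - 8) / 5760 := by
    positivity
  rw [hd₂, hd₃]
  have hgap : (r : ℝ) * (r ^ 2 - 1) / 24 * ((r : ℝ) * (r ^ 2 - 1) / 24 - 1) / 2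
      - (r : ℝ) ^ 2 * (r ^ 2 - 1) * (r ^ 2 + 11) / 1440
      = (r + 5) * (r + 3) * (r + 1) * r * (r - 1) * (r - 8) / 5760 := by ring
  exact ⟨hgap, by linarith⟩
end

section
/- Let G be a compact (or finite) group, G₁ a normal subgroup, and V a finite-dimensional complex irreducible representation of G whose restriction to G₁ is isotypic, say V|_{G₁} ≅ W ⊗ C^k with W an irreducible G₁-representation. Then the image of G in PGL(V) lies in the image of GL(W) × GL_k(C) under the tensor-product map; consequently there is a central extension G̃ of G (by C*) and representations σ: G̃ → GL(W), τ: G̃ → GL_k(C) such that σ ⊗ τ is equivalent to the pullback of V to G̃, the restriction of σ to the preimage G̃₁ of G₁ is irreducible, and the restriction of τ to G̃₁ is scalar. -/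
/-!
Transport `ρ` to `W ⊗ ℂ^k`. For `g ∈ G` the operator `ρ g` intertwines `ρW ⊗ 1` with
`(ρW ∘ conj g) ⊗ 1`, and `ρW ∘ conj g` is again irreducible. By Schur's lemma every `W → W` block
of `ρ g` (with respect to the standard basis of `ℂ^k`) is a multiple of one isomorphism `S`, so
`ρ g = S ⊗ B`. Hence `G` is the image of the fiber product `G̃ = {(g, A, B) | ρ g = A ⊗ B}`, and
the kernel of `G̃ → G` is `{(1, c, c⁻¹)} ≅ ℂˣ`, because `A ⊗ B = 1` forces `A` and `B` to be
scalars. Over `N` the pairs `(ρW n, 1)` lie in `G̃`, and `A ⊗ B = ρW n ⊗ 1` forces `B` scalar.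
-/

open scoped TensorProduct

namespace TensorProduct

section Field

variable {K W P : Type*} [Field K] [AddCommGroup W] [Module K W] [AddCommGroup P] [Module K P]

theorem tmul_ne_zero {w : W} {p : P} (hw : w ≠ 0) (hp : p ≠ 0) : w ⊗ₜ[K] p ≠ 0 := by
  obtain ⟨φ, hφ⟩ := Module.Projective.exists_dual_eq_one K hw
  obtain ⟨ψ, hψ⟩ := Module.Projective.exists_dual_eq_one K hp
  intro h
  simpa [hφ, hψ] using congrArg ((TensorProduct.lid K K).toLinearMap ∘ₗ map φ ψ) h

theorem exists_smul_one_of_map_eq_map_id [Nontrivial P] {A A₀ : Module.End K W}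
    {B : Module.End K P} (hA : A ≠ 0) (h : map A B = map A₀ .id) :
    ∃ c : K, B = c • 1 ∧ c • A = A₀ := by
  obtain ⟨w₀, hw₀⟩ : ∃ w₀, A w₀ ≠ 0 := by
    by_contra! h0
    exact hA (LinearMap.ext h0)
  obtain ⟨φ, hφ⟩ := Module.Projective.exists_dual_eq_one K hw₀
  have hB : ∀ p, B p = φ (A₀ w₀) • p := fun p => by
    simpa [hφ] using
      congrArg ((TensorProduct.lid K P).toLinearMap ∘ₗ map φ .id) congr($h (w₀ ⊗ₜ p))
  refine ⟨φ (A₀ w₀), LinearMap.ext fun p => by simp [hB], LinearMap.ext fun w => ?_⟩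
  obtain ⟨p₀, hp₀⟩ := exists_ne (0 : P)
  by_contra hne
  apply tmul_ne_zero (K := K) (sub_ne_zero.mpr hne) hp₀
  have := congr($h (w ⊗ₜ p₀))
  simp only [map_tmul, hB, LinearMap.id_apply, tmul_smul] at this
  rw [sub_tmul, LinearMap.smul_apply, ← smul_tmul', this, sub_self]

variable (K W P) in
noncomputable def mapUnitsHom :
    (Module.End K W)ˣ × (Module.End K P)ˣ →* Module.End K (W ⊗[K] P) where
  toFun x := map x.1 x.2
  map_one' := TensorProduct.map_one
  map_mul' _ _ := TensorProduct.map_mul _ _ _ _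

end Field

section PiBlock

variable {K W W' : Type*} [Field K] [AddCommGroup W] [Module K W] [AddCommGroup W']
  [Module K W'] {ι : Type*} [Fintype ι] [DecidableEq ι]

/-- The `(i, j)` entry of `f`, viewed as an `ι × ι` matrix of linear maps `W → W'`. -/
noncomputable def piBlock (f : W ⊗[K] (ι → K) →ₗ[K] W' ⊗[K] (ι → K)) (i j : ι) :
    W →ₗ[K] W' :=
  LinearMap.proj i ∘ₗ (piScalarRight K K W' ι).toLinearMap ∘ₗ f ∘ₗ
    (mk K W (ι → K)).flip (Pi.single j 1)

theorem piBlock_apply (f : W ⊗[K] (ι → K) →ₗ[K] W' ⊗[K] (ι → K)) (i j : ι) (w : W) :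
    piBlock f i j w = piScalarRight K K W' ι (f (w ⊗ₜ Pi.single j 1)) i :=
  rfl

theorem piBlock_ext {f f' : W ⊗[K] (ι → K) →ₗ[K] W' ⊗[K] (ι → K)}
    (h : ∀ i j, piBlock f i j = piBlock f' i j) : f = f' := by
  ext w j
  refine (piScalarRight K K W' ι).injective (funext fun i => ?_)
  exact congr($(h i j) w)

theorem piBlock_map (S : W →ₗ[K] W') (B : Module.End K (ι → K)) (i j : ι) :
    piBlock (map S B) i j = B (Pi.single j 1) i • S := by
  ext w
  simp [piBlock_apply]

theorem piBlock_comp_map_id (f : W ⊗[K] (ι → K) →ₗ[K] W' ⊗[K] (ι → K))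
    (A : Module.End K W) (i j : ι) :
    piBlock (f ∘ₗ map A .id) i j = piBlock f i j ∘ₗ A := by
  ext w
  simp [piBlock_apply]

theorem piBlock_map_id_comp (f : W ⊗[K] (ι → K) →ₗ[K] W' ⊗[K] (ι → K))
    (A : Module.End K W') (i j : ι) :
    piBlock (map A .id ∘ₗ f) i j = A ∘ₗ piBlock f i j := by
  ext w
  simp only [piBlock_apply, LinearMap.comp_apply]
  induction f (w ⊗ₜ Pi.single j 1) using TensorProduct.induction_on with
  | zero => simp
  | tmul x p => simp
  | add x y hx hy => simp_all

end PiBlock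

end TensorProduct

open TensorProduct

namespace Representation

section Irreducible

variable {K G H W W' : Type*} [Field K] [Monoid G] [Monoid H] [AddCommGroup W] [Module K W]
  [AddCommGroup W'] [Module K W']

theorem isIrreducible_of_forall_submodule [Nontrivial W] (ρ : Representation K G W)
    (h : ∀ p : Submodule K W, (∀ g, ∀ v ∈ p, ρ g v ∈ p) → p = ⊥ ∨ p = ⊤) :
    ρ.IsIrreducible where
  exists_pair_ne := ⟨⊥, ⊤, fun h' => bot_ne_top congr(($h').toSubmodule)⟩
  eq_bot_or_eq_top q := (h q.toSubmodule fun g _ hv => q.apply_mem_toSubmodule g hv).imp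
    Subrepresentation.ext Subrepresentation.ext

theorem IsIrreducible.comp_of_surjective (ρ : Representation K G W) [ρ.IsIrreducible]
    {f : H →* G} (hf : Function.Surjective f) : IsIrreducible (ρ.comp f) := by
  let e : Subrepresentation (ρ.comp f) ≃o Subrepresentation ρ :=
    { toFun q := ⟨q.toSubmodule, fun g v hv => by
        obtain ⟨h, rfl⟩ := hf g
        exact q.apply_mem_toSubmodule h hv⟩
      invFun q := ⟨q.toSubmodule, fun h _ hv => q.apply_mem_toSubmodule (f h) hv⟩
      left_inv _ := rfl
      right_inv _ := rfl
      map_rel_iff' := Iff.rfl }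
  exact e.isSimpleOrder_iff.mpr ‹_›

variable {ρ : Representation K G W} {σ : Representation K G W'}

theorem IsIrreducible.bijective_of_ne_zero [ρ.IsIrreducible] [σ.IsIrreducible]
    {f : W →ₗ[K] W'} (hf : ∀ g v, f (ρ g v) = σ g (f v)) (h0 : f ≠ 0) :
    Function.Bijective f :=
  (bijective_or_eq_zero (f.intertwiningMap_of_isIntertwiningMap ρ σ hf)).resolve_right
    fun h => h0 congr(($h).toLinearMap)

theorem IsIrreducible.exists_eq_smul_one [IsAlgClosed K] [FiniteDimensional K W]
    [ρ.IsIrreducible] {f : Module.End K W} (hf : ∀ g v, f (ρ g v) = ρ g (f v)) :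
    ∃ c : K, f = c • 1 := by
  obtain ⟨c, hc⟩ := algebraMap_intertwiningMap_bijective_of_isAlgClosed.2
    (f.intertwiningMap_of_isIntertwiningMap ρ ρ hf)
  exact ⟨c, congr(($hc).toLinearMap).symm⟩

end Irreducible

section Isotypic

variable {K G W W' : Type*} [Field K] [IsAlgClosed K] [AddCommGroup W] [Module K W]
  [FiniteDimensional K W] [AddCommGroup W'] [Module K W'] {ι : Type*} [Fintype ι] [DecidableEq ι]

theorem exists_eq_map_of_intertwining [Monoid G] (ρ₁ : Representation K G W)
    (ρ₂ : Representation K G W') [ρ₁.IsIrreducible] [ρ₂.IsIrreducible]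
    {T : W ⊗[K] (ι → K) →ₗ[K] W' ⊗[K] (ι → K)} (hT0 : T ≠ 0)
    (hT : ∀ g, T ∘ₗ map (ρ₁ g) .id = map (ρ₂ g) .id ∘ₗ T) :
    ∃ (S : W ≃ₗ[K] W') (B : Module.End K (ι → K)), T = map S B := by
  have hblock : ∀ i j g w, piBlock T i j (ρ₁ g w) = ρ₂ g (piBlock T i j w) := fun i j g w => by
    simpa [piBlock_comp_map_id, piBlock_map_id_comp] using congr(piBlock $(hT g) i j w)
  obtain ⟨i₀, j₀, hne⟩ : ∃ i j, piBlock T i j ≠ 0 := by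
    by_contra! h0
    exact hT0 (piBlock_ext fun i j => by rw [h0]; ext; simp [piBlock_apply])
  let S := LinearEquiv.ofBijective _ (IsIrreducible.bijective_of_ne_zero (hblock i₀ j₀) hne)
  have hS : ∀ g w, S (ρ₁ g w) = ρ₂ g (S w) := hblock i₀ j₀
  have hmul : ∀ i j, ∃ c : K, piBlock T i j = c • S.toLinearMap := fun i j => by
    obtain ⟨c, hc⟩ := IsIrreducible.exists_eq_smul_one (ρ := ρ₁)
      (f := S.symm.toLinearMap ∘ₗ piBlock T i j) fun g w => by
        rw [LinearMap.comp_apply, LinearMap.comp_apply, hblock, LinearEquiv.coe_coe,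
          S.symm_apply_eq, hS, S.apply_symm_apply]
    refine ⟨c, LinearMap.ext fun w => S.symm.injective ?_⟩
    simpa using congr($hc w)
  choose b hb using hmul
  refine ⟨S, Matrix.toLin' (Matrix.of b), piBlock_ext fun i j => ?_⟩
  simp [piBlock_map, hb]

theorem exists_units_eq_map_of_isotypic [Group G] [Nontrivial W] [Nonempty ι] {N : Subgroup G}
    [N.Normal] (ρ : Representation K G (W ⊗[K] (ι → K))) (ρW : Representation K N W)
    [ρW.IsIrreducible] (hρ : ∀ n : N, ρ n = map (ρW n) .id) (g : G) :
    ∃ (A : (Module.End K W)ˣ) (B : (Module.End K (ι → K))ˣ), ρ g = map A B := by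
  let ρ₂ : Representation K N W := ρW.comp (MulAut.conjNormal g).toMonoidHom
  have : ρ₂.IsIrreducible := IsIrreducible.comp_of_surjective ρW (MulEquiv.surjective _)
  have hT : ∀ n, ρ g ∘ₗ map (ρW n) .id = map (ρ₂ n) .id ∘ₗ ρ g := fun n => by
    change _ = map (ρW (MulAut.conjNormal g n)) .id ∘ₗ _
    rw [← hρ, ← hρ, ← Module.End.mul_eq_comp, ← Module.End.mul_eq_comp, ← map_mul, ← map_mul]
    congr 1
    simp [MulAut.conjNormal_apply]
  obtain ⟨S, B, hSB⟩ :=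
    exists_eq_map_of_intertwining ρW ρ₂ (T := ρ g) (ρ.asGroupHom g).ne_zero hT
  have hB : Function.Bijective B := by
    rw [← Module.FaithfullyFlat.lTensor_bijective_iff_bijective K W]
    have : B.lTensor W = map S.symm.toLinearMap .id ∘ₗ ρ g := by
      rw [hSB, ← map_comp]
      simp [LinearMap.lTensor]
    rw [this, LinearMap.coe_comp]
    exact (TensorProduct.congr S.symm (.refl K _)).bijective.comp
      ((Module.End.isUnit_iff _).1 (ρ.asGroupHom g).isUnit)
  exact ⟨((Module.End.isUnit_iff _).2 S.bijective).unit, ((Module.End.isUnit_iff _).2 hB).unit,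
    hSB⟩

end Isotypic

noncomputable section

variable {K G W P : Type*} [Field K] [Group G] [AddCommGroup W] [Module K W] [AddCommGroup P]
  [Module K P] (ρ : Representation K G (W ⊗[K] P))

def tensorExtension : Subgroup (G × (Module.End K W)ˣ × (Module.End K P)ˣ) :=
  (ρ.comp (MonoidHom.fst _ _)).eqLocus ((mapUnitsHom K W P).comp (MonoidHom.snd _ _))

theorem mem_tensorExtension {x : G × (Module.End K W)ˣ × (Module.End K P)ˣ} :
    x ∈ ρ.tensorExtension ↔ ρ x.1 = map x.2.1 x.2.2 :=
  Iff.rfl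

namespace tensorExtension

def proj : ρ.tensorExtension →* G :=
  (MonoidHom.fst _ _).comp ρ.tensorExtension.subtype

def left : Representation K ρ.tensorExtension W :=
  (Units.coeHom _).comp
    ((MonoidHom.fst _ _).comp ((MonoidHom.snd _ _).comp ρ.tensorExtension.subtype))

def right : Representation K ρ.tensorExtension P :=
  (Units.coeHom _).comp
    ((MonoidHom.snd _ _).comp ((MonoidHom.snd _ _).comp ρ.tensorExtension.subtype))

theorem tprod_left_right_apply (x : ρ.tensorExtension) :
    (left ρ).tprod (right ρ) x = ρ (proj ρ x) :=
  x.2.symm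

theorem proj_surjective
    (h : ∀ g, ∃ (A : (Module.End K W)ˣ) (B : (Module.End K P)ˣ), ρ g = map A B) :
    Function.Surjective (proj ρ) := fun g =>
  let ⟨A, B, hAB⟩ := h g
  ⟨⟨(g, A, B), hAB⟩, rfl⟩

def scalar : Kˣ →* ρ.tensorExtension :=
  MonoidHom.codRestrict
    (.prod 1 (.prod (Units.map (algebraMap K _).toMonoidHom)
      ((Units.map (algebraMap K _).toMonoidHom).comp invMonoidHom)))
    _ fun c => by
      simp [mem_tensorExtension, Algebra.algebraMap_eq_smul_one, map_smul_left, map_smul_right,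
        smul_smul, TensorProduct.map_one]

@[simp]
theorem scalar_apply_coe (c : Kˣ) :
    (scalar ρ c : G × (Module.End K W)ˣ × (Module.End K P)ˣ) =
      (1, Units.map (algebraMap K _).toMonoidHom c, Units.map (algebraMap K _).toMonoidHom c⁻¹) :=
  rfl

theorem scalar_injective [Nontrivial W] : Function.Injective (scalar ρ) := fun c d h => by
  have := congr((($h : G × (Module.End K W)ˣ × (Module.End K P)ˣ).2.1 : Module.End K W))
  exact Units.ext (by simpa using this)

theorem scalar_mem_center (c : Kˣ) : scalar ρ c ∈ Subgroup.center ρ.tensorExtension := by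
  rw [Subgroup.mem_center_iff]
  intro y
  ext : 1
  simp only [Subgroup.coe_mul, scalar_apply_coe]
  refine Prod.ext (by simp) (Prod.ext (Units.ext ?_) (Units.ext ?_)) <;>
    simp [Algebra.commutes]

theorem range_scalar [Nontrivial W] [Nontrivial P] : (scalar ρ).range = (proj ρ).ker := by
  ext x
  refine ⟨by rintro ⟨c, rfl⟩; rfl, fun hx => ?_⟩
  have hx' : x.1.1 = 1 := hx
  obtain ⟨c, hB, hA⟩ := exists_smul_one_of_map_eq_map_id (A₀ := 1) (x.1.2.1).ne_zero
    (((mem_tensorExtension ρ).1 x.2).symm.trans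
      (by rw [hx', map_one]; exact TensorProduct.map_one.symm))
  have hc : c ≠ 0 := by
    rintro rfl
    simp at hA
  refine ⟨(Units.mk0 c hc)⁻¹,
    Subtype.ext (Prod.ext hx'.symm (Prod.ext (Units.ext ?_) (Units.ext ?_)))⟩
  · simp [Algebra.algebraMap_eq_smul_one, ← hA, smul_smul, hc]
  · simp [Algebra.algebraMap_eq_smul_one, hB]

theorem ker_proj_le_center [Nontrivial W] [Nontrivial P] :
    (proj ρ).ker ≤ Subgroup.center ρ.tensorExtension := by
  rw [← range_scalar]
  rintro _ ⟨c, rfl⟩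
  exact scalar_mem_center ρ c

def kerProjEquivUnits [Nontrivial W] [Nontrivial P] : (proj ρ).ker ≃* Kˣ :=
  ((MonoidHom.ofInjective (scalar_injective ρ)).trans
    (MulEquiv.subgroupCongr (range_scalar ρ))).symm

section Isotypic

variable {N : Subgroup G} {ρW : Representation K N W} (hρ : ∀ n : N, ρ n = map (ρW n) .id)
include hρ

theorem mk_mem_of_isotypic (n : N) : ((n : G), ρW.asGroupHom n, 1) ∈ ρ.tensorExtension := by
  rw [mem_tensorExtension, hρ, asGroupHom_apply]
  rfl

theorem forall_submodule_of_isotypic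
    (hW : ∀ p : Submodule K W, (∀ n : N, ∀ w ∈ p, ρW n w ∈ p) → p = ⊥ ∨ p = ⊤)
    (p : Submodule K W) (hp : ∀ x, proj ρ x ∈ N → ∀ w ∈ p, left ρ x w ∈ p) :
    p = ⊥ ∨ p = ⊤ :=
  hW p fun n => by
    simpa [left, asGroupHom_apply] using hp ⟨_, mk_mem_of_isotypic ρ hρ n⟩ n.2

theorem exists_right_eq_smul_one_of_isotypic [Nontrivial W] [Nontrivial P]
    (x : ρ.tensorExtension) (hx : proj ρ x ∈ N) : ∃ c : K, right ρ x = c • 1 := by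
  obtain ⟨c, hc, -⟩ := exists_smul_one_of_map_eq_map_id (x.1.2.1).ne_zero
    (((mem_tensorExtension ρ).1 x.2).symm.trans (hρ ⟨_, hx⟩))
  exact ⟨c, hc⟩

end Isotypic

end tensorExtension

end

end Representation

open Representation tensorExtension

theorem stmt_14_general (G : Type) [Group G] (N : Subgroup G) [N.Normal]
    (V W : Type) [AddCommGroup V] [Module ℂ V] [Nontrivial V]
    [AddCommGroup W] [Module ℂ W] [FiniteDimensional ℂ W] [Nontrivial W] (k : ℕ)
    (ρ : Representation ℂ G V) (ρW : Representation ℂ N W)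
    (hWirr : ∀ p : Submodule ℂ W, (∀ n : N, ∀ w ∈ p, ρW n w ∈ p) → p = ⊥ ∨ p = ⊤)
    (e : V ≃ₗ[ℂ] W ⊗[ℂ] (Fin k → ℂ))
    (he : ∀ (n : N) (v : V),
      e (ρ (n : G) v) = TensorProduct.map (ρW n) LinearMap.id (e v)) :
    ∃ (Gt : GrpCat) (π : Gt →* G) (σ : Representation ℂ Gt W)
      (τ : Representation ℂ Gt (Fin k → ℂ)),
      Function.Surjective π ∧
      π.ker ≤ Subgroup.center Gt ∧
      Nonempty (π.ker ≃* ℂˣ) ∧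
      (∀ p : Submodule ℂ W,
        (∀ gt : Gt, π gt ∈ N → ∀ w ∈ p, σ gt w ∈ p) → p = ⊥ ∨ p = ⊤) ∧
      (∀ gt : Gt, π gt ∈ N → ∃ c : ℂ, τ gt = c • (1 : Module.End ℂ (Fin k → ℂ))) ∧
      ∃ eq : (W ⊗[ℂ] (Fin k → ℂ)) ≃ₗ[ℂ] V,
        ∀ (gt : Gt) (v : W ⊗[ℂ] (Fin k → ℂ)),
          eq ((σ.tprod τ) gt v) = ρ (π gt) (eq v) := by
  let ρ' : Representation ℂ G (W ⊗[ℂ] (Fin k → ℂ)) := (e.conjAlgEquiv ℂ).toMonoidHom.comp ρ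
  have hρ' : ∀ n : N, ρ' n = map (ρW n) .id := fun n => LinearMap.ext fun x => by
    change e (ρ n (e.symm x)) = _
    simpa using he n (e.symm x)
  have : Nonempty (Fin k) := by
    by_contra h
    rw [not_nonempty_iff] at h
    exact not_subsingleton V e.toEquiv.subsingleton
  have : ρW.IsIrreducible := isIrreducible_of_forall_submodule ρW hWirr
  -- `GrpCat` here lives in an arbitrary universe, hence the `ULift`.
  let d : ULift ρ'.tensorExtension ≃* ρ'.tensorExtension := MulEquiv.ulift
  refine ⟨GrpCat.of (ULift ρ'.tensorExtension), (proj ρ').comp d.toMonoidHom,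
    (left ρ').comp d.toMonoidHom, (right ρ').comp d.toMonoidHom,
    (proj_surjective ρ' (exists_units_eq_map_of_isotypic ρ' ρW hρ')).comp d.surjective,
    fun x hx => ?_, ⟨?_⟩, fun p hp => forall_submodule_of_isotypic ρ' hρ' hWirr p (hp ⟨·⟩),
    fun x => exists_right_eq_smul_one_of_isotypic ρ' hρ' (d x), e.symm, fun x v => ?_⟩
  · rw [Subgroup.mem_center_iff]
    intro y
    apply d.injective
    simpa using Subgroup.mem_center_iff.1 (ker_proj_le_center ρ' hx) (d y)
  · exact (MulEquiv.subgroupCongr (MonoidHom.ker_comp_mulEquiv _ _)).trans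
      ((d.symm.subgroupMap _).symm.trans (kerProjEquivUnits ρ'))
  · change e.symm ((left ρ').tprod (right ρ') (d x) v) = _
    rw [tprod_left_right_apply]
    exact e.symm_apply_apply _

/-- If `V` is an irreducible complex representation of a finite group `G` whose
restriction to a normal subgroup `N` is isotypic, `V|_N ≅ W ⊗ ℂ^k` with `W`
an irreducible `N`-representation, then there is a central extension `G̃` of `G`
by `ℂ*` and representations `σ : G̃ → GL(W)`, `τ : G̃ → GL_k(ℂ)` such that the
restriction of `σ` to the preimage of `N` is irreducible, the restriction of `τ`
to the preimage of `N` is scalar, and `σ ⊗ τ` is equivalent to the pullback of `V`. -/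
theorem stmt_14 (G : Type) [Group G] [Finite G] (N : Subgroup G) [N.Normal]
    (V W : Type) [AddCommGroup V] [Module ℂ V] [FiniteDimensional ℂ V] [Nontrivial V]
    [AddCommGroup W] [Module ℂ W] [FiniteDimensional ℂ W] [Nontrivial W] (k : ℕ)
    (ρ : Representation ℂ G V) (ρW : Representation ℂ N W)
    (hρirr : ∀ p : Submodule ℂ V, (∀ g : G, ∀ v ∈ p, ρ g v ∈ p) → p = ⊥ ∨ p = ⊤)
    (hWirr : ∀ p : Submodule ℂ W, (∀ n : N, ∀ w ∈ p, ρW n w ∈ p) → p = ⊥ ∨ p = ⊤)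
    (e : V ≃ₗ[ℂ] W ⊗[ℂ] (Fin k → ℂ))
    (he : ∀ (n : N) (v : V),
      e (ρ (n : G) v) = TensorProduct.map (ρW n) LinearMap.id (e v)) :
    ∃ (Gt : GrpCat) (π : Gt →* G) (σ : Representation ℂ Gt W)
      (τ : Representation ℂ Gt (Fin k → ℂ)),
      Function.Surjective π ∧
      π.ker ≤ Subgroup.center Gt ∧
      Nonempty (π.ker ≃* ℂˣ) ∧
      (∀ p : Submodule ℂ W,
        (∀ gt : Gt, π gt ∈ N → ∀ w ∈ p, σ gt w ∈ p) → p = ⊥ ∨ p = ⊤) ∧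
      (∀ gt : Gt, π gt ∈ N → ∃ c : ℂ, τ gt = c • (1 : Module.End ℂ (Fin k → ℂ))) ∧
      ∃ eq : (W ⊗[ℂ] (Fin k → ℂ)) ≃ₗ[ℂ] V,
        ∀ (gt : Gt) (v : W ⊗[ℂ] (Fin k → ℂ)),
          eq ((σ.tprod τ) gt v) = ρ (π gt) (eq v) :=
  stmt_14_general G N V W k ρ ρW hWirr e he
end

section
/- Let r = 13 and let S = {1, ζ, ζ³, ζ⁹} where ζ = e^{2πi/13}. Then the exterior square of S, i.e., the multiset of pairwise products {s·t : s, t ∈ S, s ≠ t chosen as unordered pairs}, equals the set X₁₃ = {e^{2πi n²/13} : 0 < n < 13/2} = {ζ, ζ⁴, ζ⁹, ζ³, ζ¹², ζ¹⁰}, with each element occurring exactly once. Moreover, S and its complex conjugate are the only 4-element sets of 13-th roots of unity (up to this pair) whose exterior square is X₁₃. -/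
/-!
Write the 13-th roots of unity as `ψ k = ζ ^ k` for the additive character `ψ : ZMod 13 → ℂ`
attached to the primitive root `ζ`. Since `ψ` is injective and turns sums into products, the
pairwise products of `{ψ a, ψ b, ψ c, ψ d}` are `ψ` of the pairwise sums of `{a, b, c, d}`, and
`X₁₃` is `ψ` of the quadratic residues `{1, 3, 4, 9, 10, 12}`. Both claims thus become a finite
statement about 4-element subsets of `ZMod 13`, checked by computation.
-/

namespace Finset

variable {M A : Type*} [CommMonoid M] [AddCommMonoid A]

/-- The eigenvalues of the `n`-th exterior power of an operator with simple eigenvalues `s`. -/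
@[to_additive subsetSums]
def subsetProds (n : ℕ) (s : Finset M) : Multiset M :=
  (s.powersetCard n).val.map fun t => t.prod id

theorem subsetSums_eq_map_sum_powersetCard (n : ℕ) (s : Finset A) :
    s.subsetSums n = (s.val.powersetCard n).map Multiset.sum := by
  rw [subsetSums, ← map_val_val_powersetCard, Multiset.map_map]
  exact Multiset.map_congr rfl fun t _ => (sum_val t).symm

theorem subsetSums_two_of_ne [DecidableEq A] {a b c d : A} (hab : a ≠ b) (hac : a ≠ c)
    (had : a ≠ d) (hbc : b ≠ c) (hbd : b ≠ d) (hcd : c ≠ d) :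
    ({a, b, c, d} : Finset A).subsetSums 2 = {a + b, a + c, a + d, b + c, b + d, c + d} := by
  have hval : ({a, b, c, d} : Finset A).val = a ::ₘ b ::ₘ c ::ₘ d ::ₘ 0 := by
    simp [hab, hac, had, hbc, hbd, hcd]
  rw [subsetSums_eq_map_sum_powersetCard, hval]
  simp [Multiset.powersetCard_cons, Multiset.powersetCard_zero_right, ← Multiset.cons_zero]

end Finset

namespace AddChar

variable {A M : Type*} [AddCommMonoid A] [CommMonoid M]

theorem map_sum_eq_prod {ι : Type*} (ψ : AddChar A M) (s : Finset ι) (f : ι → A) :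
    ψ (∑ i ∈ s, f i) = ∏ i ∈ s, ψ (f i) := by
  induction s using Finset.cons_induction with
  | empty => simp
  | cons a s ha ih => rw [Finset.sum_cons, Finset.prod_cons, map_add_eq_mul, ih]

theorem subsetProds_image [DecidableEq M] {ψ : AddChar A M} (hψ : Function.Injective ψ)
    (n : ℕ) (s : Finset A) : (s.image ψ).subsetProds n = (s.subsetSums n).map ψ := by
  have himage : s.image ψ = s.map ⟨ψ, hψ⟩ := (Finset.map_eq_image ⟨ψ, hψ⟩ s).symm
  rw [himage, Finset.subsetProds, Finset.subsetSums, Finset.powersetCard_map, Finset.map_val,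
    Multiset.map_map, Multiset.map_map]
  refine Multiset.map_congr rfl fun t _ => ?_
  simp [Finset.prod_map, ψ.map_sum_eq_prod]

end AddChar

namespace IsPrimitiveRoot

variable {n : ℕ} [NeZero n]

theorem injective_zmodChar {M : Type*} [CommMonoid M] {ζ : M} (h : IsPrimitiveRoot ζ n) :
    Function.Injective (AddChar.zmodChar n h.pow_eq_one) :=
  fun a b hab => ZMod.val_injective n (h.pow_inj a.val_lt b.val_lt hab)

theorem mem_range_zmodChar {R : Type*} [CommRing R] [IsDomain R] {ζ z : R}
    (h : IsPrimitiveRoot ζ n) (hz : z ^ n = 1) :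
    z ∈ Set.range (AddChar.zmodChar n h.pow_eq_one) := by
  obtain ⟨i, -, rfl⟩ := h.eq_pow_of_pow_eq_one hz
  exact ⟨i, AddChar.zmodChar_apply' _ i⟩

end IsPrimitiveRoot

theorem ZMod.subsetSums_two_eq_iff {S : Finset (ZMod 13)} (hS : S.card = 4) :
    S.subsetSums 2 = {1, 3, 4, 9, 10, 12} ↔ S = {0, 1, 3, 9} ∨ S = {0, 12, 10, 4} := by
  refine ⟨fun h => ?_, by rintro (rfl | rfl) <;> decide⟩
  obtain ⟨a, b, c, d, hab, hac, had, hbc, hbd, hcd, rfl⟩ := Finset.card_eq_four.mp hS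
  rw [Finset.subsetSums_two_of_ne hab hac had hbc hbd hcd] at h
  -- The six pair sums add up to `3 (a + b + c + d) = 39 = 0`, and `3` is a unit mod 13,
  -- so only the triples `(a, b, c)` remain to be searched.
  have hd : d = -(a + b + c) := by
    have hsum := congrArg Multiset.sum h
    simp only [Multiset.insert_eq_cons, Multiset.sum_cons, Multiset.sum_singleton] at hsum
    have h13 : (13 : ZMod 13) = 0 := by decide
    linear_combination 9 * hsum + (27 - 2 * (a + b + c + d)) * h13
  subst hd
  clear hS hab hac had hbc hbd hcd
  revert a b c
  decide

/-- For `ζ = e^{2πi/13}` and `S = {1, ζ, ζ³, ζ⁹}`, the multiset of pairwise products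
of distinct elements of `S` is exactly `X₁₃ = {ζ, ζ³, ζ⁴, ζ⁹, ζ¹⁰, ζ¹²}` (each element
once); moreover `S` and its complex conjugate `{1, ζ¹², ζ¹⁰, ζ⁴}` are the only
4-element sets of 13-th roots of unity with this property. -/
theorem stmt_19 (ζ : ℂ) (hζ : ζ = Complex.exp (2 * Real.pi * Complex.I / 13)) :
    ((Finset.powersetCard 2 ({1, ζ, ζ ^ 3, ζ ^ 9} : Finset ℂ)).val.map
        (fun t => t.prod id))
      = ({ζ, ζ ^ 3, ζ ^ 4, ζ ^ 9, ζ ^ 10, ζ ^ 12} : Multiset ℂ) ∧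
    ∀ T : Finset ℂ, T.card = 4 → (∀ z ∈ T, z ^ 13 = 1) →
      ((Finset.powersetCard 2 T).val.map (fun t => t.prod id))
        = ({ζ, ζ ^ 3, ζ ^ 4, ζ ^ 9, ζ ^ 10, ζ ^ 12} : Multiset ℂ) →
      T = ({1, ζ, ζ ^ 3, ζ ^ 9} : Finset ℂ) ∨
      T = ({1, ζ ^ 12, ζ ^ 10, ζ ^ 4} : Finset ℂ) := by
  have hprim : IsPrimitiveRoot ζ 13 := hζ ▸ Complex.isPrimitiveRoot_exp 13 (by norm_num)
  set ψ := AddChar.zmodChar 13 hprim.pow_eq_one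
  have hψ : Function.Injective ψ := hprim.injective_zmodChar
  have hψ_one : ψ 1 = ζ := by simpa using AddChar.zmodChar_apply' hprim.pow_eq_one 1
  have hψ_ofNat (k : ℕ) [k.AtLeastTwo] : ψ (OfNat.ofNat k) = ζ ^ (OfNat.ofNat k : ℕ) := by
    rw [← AddChar.zmodChar_apply' hprim.pow_eq_one, Nat.cast_ofNat]
  have hX : ({1, 3, 4, 9, 10, 12} : Multiset (ZMod 13)).map ψ =
      {ζ, ζ ^ 3, ζ ^ 4, ζ ^ 9, ζ ^ 10, ζ ^ 12} := by
    simp [hψ_one, hψ_ofNat]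
  have hS : ({0, 1, 3, 9} : Finset (ZMod 13)).image ψ = {1, ζ, ζ ^ 3, ζ ^ 9} := by
    simp [hψ_one, hψ_ofNat]
  have hS' : ({0, 12, 10, 4} : Finset (ZMod 13)).image ψ = {1, ζ ^ 12, ζ ^ 10, ζ ^ 4} := by
    simp [hψ_ofNat]
  refine ⟨?_, fun T hcard hroots hT => ?_⟩
  · change Finset.subsetProds 2 _ = _
    rw [← hS, AddChar.subsetProds_image hψ, (ZMod.subsetSums_two_eq_iff rfl).mpr (.inl rfl), hX]
  · obtain ⟨S, rfl⟩ := Finset.subset_univ_image_iff.mp fun z hz => by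
      obtain ⟨k, rfl⟩ := hprim.mem_range_zmodChar (hroots z hz)
      exact Finset.mem_image_of_mem ψ (Finset.mem_univ k)
    rw [Finset.card_image_of_injective S hψ] at hcard
    have hsums : S.subsetSums 2 = {1, 3, 4, 9, 10, 12} :=
      Multiset.map_injective hψ (by rw [← AddChar.subsetProds_image hψ, hX]; exact hT)
    rcases (ZMod.subsetSums_two_eq_iff hcard).mp hsums with rfl | rfl
    exacts [.inl hS, .inr hS']
end
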